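/- arXiv:2310.00957 — 2 statements merged into one kernel-verified Lean document; each statement's English description precedes it below -/
import Mathlib

section
/- Let E be a finite-dimensional real vector space of measurable maps X → H_q, E_⪰ = {F ∈ E : F(x) ⪰ 0 for all x}, and L(E) the set of moment functionals on E (functionals of the form F ↦ ∫⟨F,dμ⟩ for some positive H_q-valued measure μ with E ⊆ L¹(μ;H_q)). Then the closure of L(E) in the dual space E* equals the dual cone (E_⪰)^∧ = {ℓ ∈ E* : ℓ(F) ≥ 0 for all F ∈ E_⪰}, and consequently (L(E))^∧ = E_⪰. -/
open Matrix MeasureTheory ComplexOrder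

/-- A positive `H_q`-valued measure on `(X, 𝔛)`, given by its trace measure `τ` together with a
measurable, pointwise positive semidefinite Radon–Nikodym matrix `Φ`. -/
structure MatMeasure (X : Type*) [MeasurableSpace X] (q : ℕ) where
  τ : Measure X
  Φ : X → Matrix (Fin q) (Fin q) ℂ
  measurable_entry : ∀ i j, Measurable fun x => Φ x i j
  posSemidef : ∀ x, (Φ x).PosSemidef

/-- `μ` is a representing measure for the functional `Λ` on `E`:
every `F ∈ E` is `μ`-integrable and `Λ(F) = ∫ ⟨F, dμ⟩ = ∫ ⟨F, Φ⟩ dτ`. -/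
def Represents {X : Type*} [MeasurableSpace X] {q : ℕ}
    (E : Submodule ℝ (X → Matrix (Fin q) (Fin q) ℂ)) (Λ : E →ₗ[ℝ] ℝ)
    (μ : MatMeasure X q) : Prop :=
  (∀ F : E, Integrable
      (fun x => (((F : X → Matrix (Fin q) (Fin q) ℂ) x * μ.Φ x).trace).re) μ.τ) ∧
  ∀ F : E, Λ F = ∫ x, (((F : X → Matrix (Fin q) (Fin q) ℂ) x * μ.Φ x).trace).re ∂μ.τ

/-!
Each functional `F ↦ Re (v* F(x) v)` is the moment functional of a Dirac mass, and finitely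
supported positive matrix measures realise every nonnegative combination of them. A Hermitian
`F` is pointwise positive semidefinite exactly when all these functionals are nonnegative on it,
so `(E_⪰)^∧` is the double dual of the cone they generate, which by the bipolar theorem is its
closure. Conversely, moment functionals are nonnegative on `E_⪰` since `tr (A B) ≥ 0` for
positive semidefinite `A`, `B`.
-/

open Filter Topology

namespace Matrix

variable {n : Type*} [Fintype n]

lemma trace_mul_vecMulVec_star {R : Type*} [CommSemiring R] [StarRing R] (M : Matrix n n R)
    (v : n → R) : (M * vecMulVec v (star v)).trace = star v ⬝ᵥ M *ᵥ v := by
  rw [mul_vecMulVec, trace_vecMulVec, dotProduct_comm]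

variable {𝕜 : Type*} [RCLike 𝕜]

lemma PosSemidef.trace_mul_nonneg {A B : Matrix n n 𝕜} (hA : A.PosSemidef) (hB : B.PosSemidef) :
    0 ≤ (A * B).trace := by
  obtain ⟨m, v, rfl⟩ := posSemidef_iff_eq_sum_vecMulVec.mp hB
  simp only [Finset.mul_sum, trace_sum, trace_mul_vecMulVec_star]
  exact Finset.sum_nonneg fun k _ => hA.dotProduct_mulVec_nonneg (v k)

lemma IsHermitian.posSemidef_of_re_dotProduct_nonneg {A : Matrix n n 𝕜} (hA : A.IsHermitian)
    (h : ∀ x, 0 ≤ RCLike.re (star x ⬝ᵥ A *ᵥ x)) : A.PosSemidef :=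
  .of_dotProduct_mulVec_nonneg hA fun x =>
    RCLike.nonneg_iff.mpr ⟨h x, hA.im_star_dotProduct_mulVec_self x⟩

end Matrix

lemma Finsupp.measurable_comp {X M β : Type*} [MeasurableSpace X] [MeasurableSingletonClass X]
    [Zero M] [MeasurableSpace β] (w : X →₀ M) (g : M → β) : Measurable fun x => g (w x) :=
  measurable_const.measurable_of_countable_ne <| w.support.countable_toSet.mono
    fun x hx => Finsupp.mem_support_iff.mpr fun h => hx (by rw [h])

lemma Module.Dual.exists_seq_mem_hull_tendsto {V : Type*} [AddCommGroup V] [Module ℝ V]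
    [FiniteDimensional ℝ V] (S : Set (Module.Dual ℝ V)) (ℓ : Module.Dual ℝ V)
    (hℓ : ∀ F, (∀ s ∈ S, 0 ≤ s F) → 0 ≤ ℓ F) :
    ∃ Λ : ℕ → Module.Dual ℝ V, (∀ k, Λ k ∈ PointedCone.hull ℝ S) ∧
      ∀ F, Tendsto (fun k => Λ k F) atTop (𝓝 (ℓ F)) := by
  -- Transport the problem to a Euclidean space, where the bipolar theorem is available.
  let H := EuclideanSpace ℝ (Fin (Module.finrank ℝ V))
  let φ : V ≃ₗ[ℝ] H := LinearEquiv.ofFinrankEq _ _ (by simp [H])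
  let ψ : H →ₗ[ℝ] Module.Dual ℝ V := (innerₗ H).compl₂ φ.toLinearMap
  have hψ : ∀ ℓ' : Module.Dual ℝ V, ∃ h, ψ h = ℓ' := fun ℓ' =>
    ⟨(InnerProductSpace.toDual ℝ H).symm (ℓ' ∘ₗ φ.symm.toLinearMap).toContinuousLinearMap, by
      ext F
      simp [ψ]⟩
  let K : PointedCone ℝ H := (PointedCone.hull ℝ S).comap ψ
  obtain ⟨h₀, rfl⟩ := hψ ℓ
  have hK : h₀ ∈ closure (K : Set H) := by
    change h₀ ∈ Submodule.closure K
    rw [← ProperCone.innerDual_innerDual (Submodule.closure K)]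
    intro y hy
    have hdual : ∀ s ∈ S, 0 ≤ s (φ.symm y) := fun s hs => by
      obtain ⟨h, rfl⟩ := hψ s
      simpa [ψ] using hy (subset_closure (PointedCone.subset_hull (R := ℝ) hs))
    simpa [ψ, real_inner_comm] using hℓ (φ.symm y) hdual
  obtain ⟨u, hu, hlim⟩ := mem_closure_iff_seq_limit.mp hK
  exact ⟨fun k => ψ (u k), hu, fun F => hlim.inner tendsto_const_nhds⟩

section MomentFunctionals

variable {X : Type*} {q : ℕ} (E : Submodule ℝ (X → Matrix (Fin q) (Fin q) ℂ))

def quadEval (x : X) (v : Fin q → ℂ) : Module.Dual ℝ E where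
  toFun F := (star v ⬝ᵥ (F : X → Matrix (Fin q) (Fin q) ℂ) x *ᵥ v).re
  map_add' F G := by simp [add_mulVec]
  map_smul' c F := by simp [smul_mulVec]

noncomputable def traceForm (x : X) : Matrix (Fin q) (Fin q) ℂ →ₗ[ℝ] Module.Dual ℝ E :=
  LinearMap.mk₂ ℝ (fun M F => (((F : X → Matrix (Fin q) (Fin q) ℂ) x * M).trace).re)
    (fun M N F => by simp [mul_add]) (fun c M F => by simp)
    (fun M F G => by simp [add_mul]) (fun c M F => by simp)

/-- The moment functional of the matrix measure `∑ x, δ_x • w x`. -/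
noncomputable def atomicFunctional :
    (X →₀ Matrix (Fin q) (Fin q) ℂ) →ₗ[ℝ] Module.Dual ℝ E :=
  Finsupp.lsum ℝ (traceForm E)

lemma atomicFunctional_apply (w : X →₀ Matrix (Fin q) (Fin q) ℂ) (F : E) :
    atomicFunctional E w F =
      ∑ x ∈ w.support, (((F : X → Matrix (Fin q) (Fin q) ℂ) x * w x).trace).re := by
  simp [atomicFunctional, Finsupp.lsum_apply, Finsupp.sum, traceForm]

lemma atomicFunctional_single_vecMulVec (x : X) (v : Fin q → ℂ) :
    atomicFunctional E (Finsupp.single x (vecMulVec v (star v))) = quadEval E x v := by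
  ext F
  simp [atomicFunctional, traceForm, quadEval, trace_mul_vecMulVec_star]

variable (X q) in
def psdCone : PointedCone ℝ (X →₀ Matrix (Fin q) (Fin q) ℂ) where
  carrier := {w | ∀ x, (w x).PosSemidef}
  add_mem' hw hw' x := (hw x).add (hw' x)
  zero_mem' _ := .zero
  smul_mem' c _ hw x := (hw x).smul c.2

lemma single_mem_psdCone {x : X} {M : Matrix (Fin q) (Fin q) ℂ} (hM : M.PosSemidef) :
    Finsupp.single x M ∈ psdCone X q := fun y => by
  classical
  rw [Finsupp.single_apply]
  split_ifs
  exacts [hM, .zero]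

lemma exists_represents_atomicFunctional [MeasurableSpace X] [MeasurableSingletonClass X]
    {w : X →₀ Matrix (Fin q) (Fin q) ℂ} (hw : w ∈ psdCone X q) :
    ∃ μ : MatMeasure X q, Represents E (atomicFunctional E w) μ := by
  let μ : MatMeasure X q :=
    { τ := ∑ x ∈ w.support, Measure.dirac x
      Φ := w
      measurable_entry := fun i j => w.measurable_comp fun M => M i j
      posSemidef := hw }
  have hint : ∀ (F : E) (x : X), Integrable
      (fun y => (((F : X → Matrix (Fin q) (Fin q) ℂ) y * w y).trace).re) (Measure.dirac x) :=
    fun F x => integrable_dirac enorm_lt_top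
  refine ⟨μ, fun F => integrable_finsetSum_measure.mpr fun x _ => hint F x, fun F => ?_⟩
  rw [atomicFunctional_apply, integral_finsetSum_measure fun x _ => hint F x]
  simp only [integral_dirac]

lemma exists_represents_of_mem_hull [MeasurableSpace X] [MeasurableSingletonClass X]
    {Λ : Module.Dual ℝ E}
    (hΛ : Λ ∈ PointedCone.hull ℝ (Set.range (Function.uncurry (quadEval E)))) :
    ∃ μ : MatMeasure X q, Represents E Λ μ := by
  have hgen : PointedCone.hull ℝ (Set.range (Function.uncurry (quadEval E))) ≤
      (psdCone X q).map (atomicFunctional E) :=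
    Submodule.span_le.mpr <| Set.range_subset_iff.mpr fun ⟨x, v⟩ =>
      ⟨_, single_mem_psdCone (posSemidef_vecMulVec_self_star v),
        atomicFunctional_single_vecMulVec E x v⟩
  obtain ⟨w, hw, rfl⟩ := PointedCone.mem_map.mp (hgen hΛ)
  exact exists_represents_atomicFunctional E hw

lemma exists_represents_quadEval [MeasurableSpace X] [MeasurableSingletonClass X] (x : X)
    (v : Fin q → ℂ) : ∃ μ : MatMeasure X q, Represents E (quadEval E x v) μ :=
  exists_represents_of_mem_hull E (PointedCone.subset_hull (R := ℝ) (Set.mem_range_self (x, v)))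

variable {E} in
lemma Represents.nonneg [MeasurableSpace X] {Λ : Module.Dual ℝ E} {μ : MatMeasure X q}
    (h : Represents E Λ μ) {F : E}
    (hF : ∀ x, ((F : X → Matrix (Fin q) (Fin q) ℂ) x).PosSemidef) : 0 ≤ Λ F := by
  rw [h.2 F]
  exact integral_nonneg fun x =>
    (RCLike.nonneg_iff.mp ((hF x).trace_mul_nonneg (μ.posSemidef x))).1

lemma posSemidef_of_quadEval_nonneg {F : E}
    (hFh : ∀ x, ((F : X → Matrix (Fin q) (Fin q) ℂ) x).IsHermitian)
    (hF : ∀ x v, 0 ≤ quadEval E x v F) (x : X) :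
    ((F : X → Matrix (Fin q) (Fin q) ℂ) x).PosSemidef :=
  (hFh x).posSemidef_of_re_dotProduct_nonneg (hF x)

end MomentFunctionals

theorem stmt_13_general {X : Type*} [MeasurableSpace X] [MeasurableSingletonClass X] {q : ℕ}
    (E : Submodule ℝ (X → Matrix (Fin q) (Fin q) ℂ)) [FiniteDimensional ℝ E]
    (hherm : ∀ F ∈ E, ∀ x, (F x).IsHermitian) :
    (∀ ℓ : E →ₗ[ℝ] ℝ,
      ((∀ F : E, (∀ x, ((F : X → Matrix (Fin q) (Fin q) ℂ) x).PosSemidef) → 0 ≤ ℓ F) ↔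
        ∃ Λs : ℕ → (E →ₗ[ℝ] ℝ),
          (∀ n, ∃ μ : MatMeasure X q, Represents E (Λs n) μ) ∧
          ∀ F : E, Filter.Tendsto (fun n => Λs n F) Filter.atTop (nhds (ℓ F)))) ∧
    (∀ F : E, (∀ x, ((F : X → Matrix (Fin q) (Fin q) ℂ) x).PosSemidef) ↔
      ∀ Λ : E →ₗ[ℝ] ℝ, (∃ μ : MatMeasure X q, Represents E Λ μ) → 0 ≤ Λ F) := by
  refine ⟨fun ℓ => ⟨fun hℓ => ?_, ?_⟩, fun F => ⟨?_, ?_⟩⟩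
  · obtain ⟨Λs, hmem, hlim⟩ := Module.Dual.exists_seq_mem_hull_tendsto
      (Set.range (Function.uncurry (quadEval E))) ℓ fun F hF =>
        hℓ F <| posSemidef_of_quadEval_nonneg E (hherm F F.2) fun x v =>
          hF _ (Set.mem_range_self (x, v))
    exact ⟨Λs, fun n => exists_represents_of_mem_hull E (hmem n), hlim⟩
  · rintro ⟨Λs, hrep, hlim⟩ F hF
    exact ge_of_tendsto' (hlim F) fun n => (hrep n).elim fun _ hμ => hμ.nonneg hF
  · rintro hF Λ ⟨μ, hμ⟩
    exact hμ.nonneg hF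
  · intro hF
    exact posSemidef_of_quadEval_nonneg E (hherm F F.2) fun x v =>
      hF _ (exists_represents_quadEval E x v)

/-- The closure of the cone of moment functionals on `E` (in the sense of pointwise limits,
which in finite dimension coincides with norm closure) equals the dual cone of
`E_⪰ = {F ∈ E : F(x) ⪰ 0 for all x}`; consequently, the dual cone of the moment functionals
is `E_⪰` itself. -/
theorem stmt_13 {X : Type*} [MeasurableSpace X] [MeasurableSingletonClass X] {q : ℕ}
    (E : Submodule ℝ (X → Matrix (Fin q) (Fin q) ℂ)) [FiniteDimensional ℝ E]
    (hmeas : ∀ F ∈ E, ∀ i j, Measurable fun x => F x i j)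
    (hherm : ∀ F ∈ E, ∀ x, (F x).IsHermitian) :
    (∀ ℓ : E →ₗ[ℝ] ℝ,
      ((∀ F : E, (∀ x, ((F : X → Matrix (Fin q) (Fin q) ℂ) x).PosSemidef) → 0 ≤ ℓ F) ↔
        ∃ Λs : ℕ → (E →ₗ[ℝ] ℝ),
          (∀ n, ∃ μ : MatMeasure X q, Represents E (Λs n) μ) ∧
          ∀ F : E, Filter.Tendsto (fun n => Λs n F) Filter.atTop (nhds (ℓ F)))) ∧
    (∀ F : E, (∀ x, ((F : X → Matrix (Fin q) (Fin q) ℂ) x).PosSemidef) ↔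
      ∀ Λ : E →ₗ[ℝ] ℝ, (∃ μ : MatMeasure X q, Represents E Λ μ) → 0 ≤ Λ F) :=
  stmt_13_general E hherm
end

section
/- Let Λ be a moment functional on E and x ∈ X. Then W(Λ;x) := ⋃_{μ ∈ M_Λ} ran(μ({x})) is a linear subspace of ℂ^q, and there exists a finitely atomic representing measure ν of Λ with W(Λ;x) = ran(ν({x})). -/
/-!
Among the representing measures choose `μ` whose atom at `x` has maximal range `W`
(submodules of `ℂ^q` satisfy the ascending chain condition). By the Richter–Tchakaloff theorem
(the integral of an integrable `ℝⁿ`-valued function lies in the convex cone generated by its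
values) the part of `μ` off `x` can be replaced by finitely many atoms, which gives a finitely
atomic representing measure `ν` with `ν({x}) = μ({x})`. For any representing measure `μ'`,
`½ μ' + ½ ν` is again a representing measure, and since `ran A ⊆ ran (A + B)` for positive
semidefinite `A`, `B`, the range of its atom at `x` contains both `ran μ'({x})` and `W`. By
maximality it equals `W`, so `ran μ'({x}) ⊆ W = ran ν({x})`.
-/

open Matrix MeasureTheory ComplexOrder

/-- `μ({x})`, the atom matrix of a positive `H_q`-valued measure at `x`. -/
noncomputable def matAtom {X : Type*} [MeasurableSpace X] {q : ℕ}
    (μ : MatMeasure X q) (x : X) : Matrix (Fin q) (Fin q) ℂ :=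
  (μ.τ {x}).toReal • μ.Φ x

open scoped NNReal

section Conic

lemma nonpos_of_forall_nonneg_mul_le {a M : ℝ} (h : ∀ t : ℝ, 0 ≤ t → t * a ≤ M) : a ≤ 0 := by
  by_contra! ha
  have := h ((|M| + 1) / a) (by positivity)
  rw [div_mul_cancel₀ _ ha.ne'] at this
  linarith [le_abs_self M]

variable {V : Type*} [NormedAddCommGroup V] [NormedSpace ℝ V] [FiniteDimensional ℝ V]

lemma PointedCone.exists_dual_nonpos_of_notMem (C : PointedCone ℝ V)
    (hC : Submodule.span ℝ (C : Set V) = ⊤) {b : V} (hb : b ∉ C) :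
    ∃ f : StrongDual ℝ V, f ≠ 0 ∧ (∀ c ∈ C, f c ≤ 0) ∧ 0 ≤ f b := by
  have hint : (interior (C : Set V)).Nonempty := by
    rw [C.convex.interior_nonempty_iff_affineSpan_eq_top, ← AffineSubspace.coe_eq_univ_iff,
      ← Set.insert_eq_self.2 C.zero_mem, affineSpan_insert_zero, hC, Submodule.top_coe]
  obtain ⟨f, u, hf, hCu, hub⟩ := geometric_hahn_banach_of_nonempty_interior C.convex
    (convex_singleton b) (Set.disjoint_singleton_right.2 fun h => hb (interior_subset h))
    hint (Set.singleton_nonempty b)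
  have hnonpos : ∀ c ∈ C, f c ≤ 0 := fun c hc =>
    nonpos_of_forall_nonneg_mul_le fun t ht => by simpa using hCu _ (C.smul_mem ht hc)
  exact ⟨f, hf, hnonpos, by simpa using (hCu 0 C.zero_mem).trans (hub b rfl)⟩

variable {X : Type*} [MeasurableSpace X]

lemma integral_mem_hull_image_of_mem_submodule {τ : Measure X} {g : X → V} {s : Set X}
    (hg : Integrable g τ) (hs : ∀ᵐ x ∂τ, x ∈ s) (K : Submodule ℝ V) (hK : ∀ x ∈ s, g x ∈ K)
    (hK_hull : ∀ g' : X → K, Integrable g' τ → ∫ x, g' x ∂τ ∈ PointedCone.hull ℝ (g' '' s)) :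
    ∫ x, g x ∂τ ∈ PointedCone.hull ℝ (g '' s) := by
  obtain ⟨K', hKK'⟩ := K.exists_isCompl
  let π : V →L[ℝ] K := LinearMap.toContinuousLinearMap (K.projectionOnto K' hKK')
  have hπ : ∀ x ∈ s, (π (g x) : V) = g x := fun x hx =>
    congrArg Subtype.val (K.projectionOnto_apply_left hKK' ⟨g x, hK x hx⟩)
  have : CompleteSpace K := FiniteDimensional.complete ℝ K
  have hint : ∫ x, g x ∂τ = K.subtypeL (∫ x, π (g x) ∂τ) := by
    rw [← K.subtypeL.integral_comp_comm (π.integrable_comp hg)]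
    exact integral_congr_ae (hs.mono fun x hx => (hπ x hx).symm)
  have himage :
      g '' s = K.subtype.restrictScalars {c : ℝ // 0 ≤ c} '' ((fun x => π (g x)) '' s) := by
    rw [Set.image_image]
    exact (Set.image_congr hπ).symm
  rw [hint, himage]
  exact Submodule.apply_mem_span_image_of_mem_span _ (hK_hull _ (π.integrable_comp hg))

theorem integral_mem_hull_image {τ : Measure X} {g : X → V} {s : Set X}
    (hg : Integrable g τ) (hs : ∀ᵐ x ∂τ, x ∈ s) :
    ∫ x, g x ∂τ ∈ PointedCone.hull ℝ (g '' s) := by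
  induction hn : Module.finrank ℝ V using Nat.strong_induction_on generalizing V s with
  | _ n ih =>
  have ih_proper : ∀ K : Submodule ℝ V, K ≠ ⊤ → ∀ {s : Set X}, (∀ᵐ x ∂τ, x ∈ s) →
      ∀ g' : X → K, Integrable g' τ → ∫ x, g' x ∂τ ∈ PointedCone.hull ℝ (g' '' s) :=
    fun K hK s hs g' hg' => ih _ (hn ▸ Submodule.finrank_lt hK) hg' hs rfl
  by_cases hspan : Submodule.span ℝ (g '' s) = ⊤
  swap
  · exact integral_mem_hull_image_of_mem_submodule hg hs _
      (fun x hx => Submodule.subset_span (Set.mem_image_of_mem g hx)) (ih_proper _ hspan hs)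
  by_contra hb
  have hC : Submodule.span ℝ (PointedCone.hull ℝ (g '' s) : Set V) = ⊤ :=
    top_unique (hspan ▸ Submodule.span_mono PointedCone.subset_hull)
  obtain ⟨f, hf, hfC, hfb⟩ := PointedCone.exists_dual_nonpos_of_notMem _ hC hb
  -- `f ∘ g ≤ 0` a.e. while `∫ f ∘ g = f (∫ g) ≥ 0`, so `g` lies a.e. in the hyperplane `ker f`.
  have hfg : ∀ᵐ x ∂τ, f (g x) ≤ 0 :=
    hs.mono fun x hx => hfC _ (PointedCone.subset_hull (Set.mem_image_of_mem g hx))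
  have hfg0 : ∀ᵐ x ∂τ, f (g x) = 0 := by
    have hint : ∫ x, f (g x) ∂τ = 0 := le_antisymm (integral_nonpos_of_ae hfg)
      ((f.integral_comp_comm hg).symm ▸ hfb)
    filter_upwards [(integral_eq_zero_iff_of_nonneg_ae (hfg.mono fun x hx => neg_nonneg.2 hx)
      (f.integrable_comp hg).neg).1 (by rw [integral_neg, hint, neg_zero])] with x hx
    simpa using hx
  have hker : LinearMap.ker (f : V →ₗ[ℝ] ℝ) ≠ ⊤ := fun h =>
    hf (ContinuousLinearMap.coe_injective (LinearMap.ker_eq_top.1 h))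
  have := integral_mem_hull_image_of_mem_submodule (s := {x | x ∈ s ∧ f (g x) = 0}) hg
    (hs.and hfg0) _ (fun x hx => hx.2) (ih_proper _ hker (hs.and hfg0))
  exact hb (Submodule.span_mono (Set.image_mono fun x hx => hx.1) this)

theorem exists_integral_eq_sum_smul {τ : Measure X} {g : X → V} {s : Set X}
    (hg : Integrable g τ) (hs : ∀ᵐ x ∂τ, x ∈ s) :
    ∃ (k : ℕ) (p : Fin k → X) (c : Fin k → ℝ), (∀ j, 0 ≤ c j) ∧ (∀ j, p j ∈ s) ∧
      ∫ x, g x ∂τ = ∑ j, c j • g (p j) := by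
  obtain ⟨k, c, v, hv⟩ := Submodule.mem_span_set'.1 (integral_mem_hull_image hg hs)
  choose p hp hpv using fun j => (v j).2
  exact ⟨k, p, fun j => c j, fun j => (c j).2, hp, by rw [← hv]; simp only [hpv]; rfl⟩

end Conic

lemma integral_eq_setIntegral_compl_add_sum {X : Type*} [MeasurableSpace X]
    [MeasurableSingletonClass X] {τ : Measure X} {f : X → ℝ} (hf : Integrable f τ)
    (P : Finset X) :
    ∫ x, f x ∂τ = ∫ x in (↑P : Set X)ᶜ, f x ∂τ + ∑ p ∈ P, τ.real {p} * f p := by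
  rw [← integral_add_compl P.measurableSet hf, setIntegral_finset P hf.integrableOn, add_comm]
  rfl

namespace Matrix
variable {n 𝕜 : Type*} [Fintype n] [DecidableEq n] [RCLike 𝕜]

lemma IsHermitian.range_mulVecLin_le_of_ker_le {A B : Matrix n n 𝕜} (hA : A.IsHermitian)
    (hB : B.IsHermitian) (h : LinearMap.ker B.mulVecLin ≤ LinearMap.ker A.mulVecLin) :
    LinearMap.range A.mulVecLin ≤ LinearMap.range B.mulVecLin := by
  let e : EuclideanSpace 𝕜 n ≃ₗ[𝕜] (n → 𝕜) := WithLp.linearEquiv 2 𝕜 (n → 𝕜)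
  have hE : ∀ M : Matrix n n 𝕜,
      M.toEuclideanLin = e.symm.toLinearMap ∘ₗ M.mulVecLin ∘ₗ e.toLinearMap := fun M => rfl
  have hrange : ∀ M : Matrix n n 𝕜, LinearMap.range M.toEuclideanLin
      = (LinearMap.range M.mulVecLin).map e.symm.toLinearMap := fun M => by
    rw [hE, LinearMap.range_comp, LinearMap.range_comp_of_range_eq_top _ e.range]
  have hker : ∀ M : Matrix n n 𝕜, LinearMap.ker M.toEuclideanLin
      = (LinearMap.ker M.mulVecLin).comap e.toLinearMap := fun M => by
    rw [hE, LinearEquiv.ker_comp, LinearMap.ker_comp]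
  have hrange_eq : ∀ M : Matrix n n 𝕜, M.IsHermitian →
      LinearMap.range M.toEuclideanLin = (LinearMap.ker M.toEuclideanLin)ᗮ := fun M hM => by
    rw [← (isSymmetric_toEuclideanLin_iff.2 hM).orthogonal_range,
      Submodule.orthogonal_orthogonal]
  have : LinearMap.range A.toEuclideanLin ≤ LinearMap.range B.toEuclideanLin := by
    rw [hrange_eq A hA, hrange_eq B hB, hker, hker]
    exact Submodule.orthogonal_le (Submodule.comap_mono h)
  rwa [hrange, hrange, Submodule.map_le_map_iff_of_injective e.symm.injective] at this

lemma PosSemidef.range_mulVecLin_le_smul_add_smul {A B : Matrix n n 𝕜} (hA : A.PosSemidef)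
    (hB : B.PosSemidef) {a b : ℝ} (ha : 0 < a) (hb : 0 ≤ b) :
    LinearMap.range A.mulVecLin ≤ LinearMap.range (a • A + b • B).mulVecLin := by
  have haA := hA.smul ha.le
  have hbB := hB.smul hb
  refine hA.1.range_mulVecLin_le_of_ker_le (haA.add hbB).1 fun w hw => ?_
  replace hw : (a • A + b • B) *ᵥ w = 0 := hw
  have hsum : star w ⬝ᵥ (a • A) *ᵥ w + star w ⬝ᵥ (b • B) *ᵥ w = 0 := by
    rw [← dotProduct_add, ← add_mulVec, hw, dotProduct_zero]
  have hzero : (a • A) *ᵥ w = 0 := (haA.dotProduct_mulVec_zero_iff w).1 <|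
    le_antisymm (hsum ▸ le_add_of_nonneg_right (hbB.dotProduct_mulVec_nonneg w))
      (haA.dotProduct_mulVec_nonneg w)
  rw [smul_mulVec, smul_eq_zero] at hzero
  exact hzero.resolve_left ha.ne'

end Matrix

namespace MatMeasure
variable {X : Type*} [MeasurableSpace X] {q : ℕ}

lemma matAtom_posSemidef (μ : MatMeasure X q) (x : X) : (matAtom μ x).PosSemidef :=
  (μ.posSemidef x).smul ENNReal.toReal_nonneg

variable [MeasurableSingletonClass X] [DecidableEq X]

/-- The measure `c • μ` off `P`, with the atom `N p` at each `p ∈ P`. -/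
noncomputable def withAtomsOn (μ : MatMeasure X q) (c : ℝ≥0) (P : Finset X)
    (N : X → Matrix (Fin q) (Fin q) ℂ) (hN : ∀ p ∈ P, (N p).PosSemidef) : MatMeasure X q where
  τ := c • μ.τ.restrict (↑P)ᶜ + ∑ p ∈ P, Measure.dirac p
  Φ p := if p ∈ P then N p else μ.Φ p
  measurable_entry i j := (μ.measurable_entry i j).measurable_of_countable_ne
    (P.countable_toSet.mono fun p hp => by_contra fun h => hp (by simp [show p ∉ P from h]))
  posSemidef p := by
    split_ifs with hp
    exacts [hN p hp, μ.posSemidef p]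

variable (μ : MatMeasure X q) (c : ℝ≥0) (P : Finset X) (N : X → Matrix (Fin q) (Fin q) ℂ)
  (hN : ∀ p ∈ P, (N p).PosSemidef)

lemma withAtomsOn_τ :
    (μ.withAtomsOn c P N hN).τ = c • μ.τ.restrict (↑P)ᶜ + ∑ p ∈ P, Measure.dirac p := rfl

lemma withAtomsOn_Φ (x : X) :
    (μ.withAtomsOn c P N hN).Φ x = if x ∈ P then N x else μ.Φ x := rfl

lemma matAtom_withAtomsOn {x : X} (hx : x ∈ P) : matAtom (μ.withAtomsOn c P N hN) x = N x := by
  have hτ : (μ.withAtomsOn c P N hN).τ {x} = 1 := by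
    simp [withAtomsOn_τ, Measure.restrict_apply, hx]
  simp [matAtom, hτ, withAtomsOn_Φ, hx]

variable {μ c P N hN} {f : X → Matrix (Fin q) (Fin q) ℂ}

lemma ae_restrict_compl_re_trace_mul_eq :
    (fun x => ((f x * (μ.withAtomsOn c P N hN).Φ x).trace).re) =ᵐ[μ.τ.restrict (↑P)ᶜ]
      fun x => ((f x * μ.Φ x).trace).re := by
  filter_upwards [ae_restrict_mem P.measurableSet.compl] with x hx
  simp_all [withAtomsOn_Φ]

lemma integrable_re_trace_mul_withAtomsOn
    (hf : Integrable (fun x => ((f x * μ.Φ x).trace).re) μ.τ) :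
    Integrable (fun x => ((f x * (μ.withAtomsOn c P N hN).Φ x).trace).re)
      (μ.withAtomsOn c P N hN).τ :=
  ((hf.restrict.congr ae_restrict_compl_re_trace_mul_eq.symm).smul_measure
    ENNReal.coe_ne_top).add_measure
    (integrable_finsetSum_measure.2 fun _ _ => integrable_dirac enorm_lt_top)

lemma integral_re_trace_mul_withAtomsOn
    (hf : Integrable (fun x => ((f x * μ.Φ x).trace).re) μ.τ) :
    ∫ x, ((f x * (μ.withAtomsOn c P N hN).Φ x).trace).re ∂(μ.withAtomsOn c P N hN).τ
      = c * ∫ x in (↑P : Set X)ᶜ, ((f x * μ.Φ x).trace).re ∂μ.τ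
        + ∑ p ∈ P, ((f p * N p).trace).re := by
  have hint := integrable_re_trace_mul_withAtomsOn (c := c) (hN := hN) hf
  rw [withAtomsOn_τ] at hint ⊢
  rw [integral_add_measure hint.left_of_add_measure hint.right_of_add_measure,
    integral_smul_nnreal_measure, integral_congr_ae ae_restrict_compl_re_trace_mul_eq,
    integral_finsetSum_measure fun p _ => integrable_dirac enorm_lt_top]
  congr 1
  exact Finset.sum_congr rfl fun p hp => by simp [withAtomsOn_Φ, hp]

end MatMeasure

/-- Integration against the atom `M δ_p`. -/
noncomputable def traceEval {X : Type*} {q : ℕ} (E : Submodule ℝ (X → Matrix (Fin q) (Fin q) ℂ))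
    (p : X) (M : Matrix (Fin q) (Fin q) ℂ) : E →ₗ[ℝ] ℝ :=
  Complex.reLm ∘ₗ traceLinearMap (Fin q) ℝ ℂ ∘ₗ LinearMap.mulRight ℝ M ∘ₗ
    LinearMap.proj p ∘ₗ E.subtype

lemma traceEval_apply {X : Type*} {q : ℕ} (E : Submodule ℝ (X → Matrix (Fin q) (Fin q) ℂ))
    (p : X) (M : Matrix (Fin q) (Fin q) ℂ) (F : E) :
    traceEval E p M F = (((F : X → Matrix (Fin q) (Fin q) ℂ) p * M).trace).re := rfl

namespace Represents
variable {X : Type*} [MeasurableSpace X] [MeasurableSingletonClass X] [DecidableEq X] {q : ℕ}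
  {E : Submodule ℝ (X → Matrix (Fin q) (Fin q) ℂ)} {Λ : E →ₗ[ℝ] ℝ} {μ : MatMeasure X q}

theorem exists_atomic_sum_eq_matAtom [FiniteDimensional ℝ E] (hμ : Represents E Λ μ) (x : X) :
    ∃ (k : ℕ) (pts : Fin k → X) (Mats : Fin k → Matrix (Fin q) (Fin q) ℂ),
      (∀ j, (Mats j).PosSemidef) ∧
      (∀ F : E, Λ F =
        ∑ j, (((F : X → Matrix (Fin q) (Fin q) ℂ) (pts j) * Mats j).trace).re) ∧
      ∑ j ∈ Finset.univ.filter (fun j => pts j = x), Mats j = matAtom μ x := by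
  let B := Module.finBasis ℝ E
  let g : X → Fin (Module.finrank ℝ E) → ℝ :=
    fun p i => (((B i : X → Matrix (Fin q) (Fin q) ℂ) p * μ.Φ p).trace).re
  have hg : ∀ i, Integrable (g · i) (μ.τ.restrict {x}ᶜ) := fun i => (hμ.1 (B i)).restrict
  obtain ⟨k, p, c, hc, hpx, hsum⟩ := exists_integral_eq_sum_smul (Integrable.of_eval hg)
    (ae_restrict_mem (measurableSet_singleton x).compl)
  let pts : Fin (k + 1) → X := Fin.cons x p
  let Mats : Fin (k + 1) → Matrix (Fin q) (Fin q) ℂ :=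
    Fin.cons (matAtom μ x) fun j => c j • μ.Φ (p j)
  have hΛ : Λ = ∑ j, traceEval E (pts j) (Mats j) := B.ext fun i => by
    have hcoord := congrFun hsum i
    rw [eval_integral hg] at hcoord
    rw [hμ.2, integral_eq_setIntegral_compl_add_sum (hμ.1 (B i)) {x}, Finset.coe_singleton,
      LinearMap.sum_apply, Fin.sum_univ_succ]
    simp [hcoord, traceEval_apply, pts, Mats, g, matAtom, measureReal_def, add_comm]
  have hfilter : Finset.univ.filter (fun j => pts j = x) = {0} := by
    ext j
    refine Fin.cases (by simp [pts]) (fun j => ?_) j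
    simpa [pts] using hpx j
  refine ⟨k + 1, pts, Mats, Fin.cases (μ.matAtom_posSemidef x)
    fun j => (μ.posSemidef _).smul (hc j), fun F => by rw [hΛ, LinearMap.sum_apply]; rfl, ?_⟩
  simp [hfilter, Mats]

theorem exists_matAtom_eq_midpoint (hμ : Represents E Λ μ) {k : ℕ} (pts : Fin k → X)
    (Mats : Fin k → Matrix (Fin q) (Fin q) ℂ) (hMats : ∀ j, (Mats j).PosSemidef)
    (hΛ : ∀ F : E, Λ F =
      ∑ j, (((F : X → Matrix (Fin q) (Fin q) ℂ) (pts j) * Mats j).trace).re) (x : X) :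
    ∃ ρ : MatMeasure X q, Represents E Λ ρ ∧ matAtom ρ x =
      (2⁻¹ : ℝ) • matAtom μ x +
        (2⁻¹ : ℝ) • ∑ j ∈ Finset.univ.filter (fun j => pts j = x), Mats j := by
  let P := insert x (Finset.univ.image pts)
  let N : X → Matrix (Fin q) (Fin q) ℂ := fun p =>
    (2⁻¹ : ℝ) • matAtom μ p + (2⁻¹ : ℝ) • ∑ j ∈ Finset.univ.filter (fun j => pts j = p), Mats j
  have hN : ∀ p ∈ P, (N p).PosSemidef := fun p _ =>
    ((μ.matAtom_posSemidef p).smul (by norm_num)).add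
      ((posSemidef_sum _ fun j _ => hMats j).smul (by norm_num))
  refine ⟨μ.withAtomsOn 2⁻¹ P N hN, ⟨fun F => MatMeasure.integrable_re_trace_mul_withAtomsOn
    (hμ.1 F), fun F => ?_⟩, MatMeasure.matAtom_withAtomsOn _ _ _ _ _ (Finset.mem_insert_self _ _)⟩
  let f : X → ℝ := fun p => (((F : X → Matrix (Fin q) (Fin q) ℂ) p * μ.Φ p).trace).re
  have hNF : ∀ p, (((F : X → Matrix (Fin q) (Fin q) ℂ) p * N p).trace).re = 2⁻¹ *
      (μ.τ.real {p} * f p) + 2⁻¹ * ∑ j ∈ Finset.univ.filter (fun j => pts j = p),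
        (((F : X → Matrix (Fin q) (Fin q) ℂ) p * Mats j).trace).re := fun p => by
    simp [N, f, matAtom, measureReal_def, Matrix.mul_add, Matrix.mul_sum, Matrix.trace_sum]
  have hfib : ∑ p ∈ P, ∑ j ∈ Finset.univ.filter (fun j => pts j = p),
      (((F : X → Matrix (Fin q) (Fin q) ℂ) p * Mats j).trace).re
      = ∑ j, (((F : X → Matrix (Fin q) (Fin q) ℂ) (pts j) * Mats j).trace).re := by
    rw [← Finset.sum_fiberwise_of_maps_to (t := P) (g := pts)
      fun j _ => Finset.mem_insert_of_mem (Finset.mem_image_of_mem _ (Finset.mem_univ j))]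
    refine Finset.sum_congr rfl fun p _ => Finset.sum_congr rfl fun j hj => ?_
    rw [(Finset.mem_filter.1 hj).2]
  have hsplit := integral_eq_setIntegral_compl_add_sum (hμ.1 F) P
  rw [← hμ.2 F] at hsplit
  rw [MatMeasure.integral_re_trace_mul_withAtomsOn (hμ.1 F),
    Finset.sum_congr rfl fun p _ => hNF p, Finset.sum_add_distrib, ← Finset.mul_sum,
    ← Finset.mul_sum, hfib, ← hΛ F]
  push_cast
  linarith

end Represents

theorem stmt_17_general {X : Type*} [MeasurableSpace X] [MeasurableSingletonClass X] [DecidableEq X]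
    {q : ℕ} (E : Submodule ℝ (X → Matrix (Fin q) (Fin q) ℂ)) [FiniteDimensional ℝ E]
    (Λ : E →ₗ[ℝ] ℝ) (hΛ : ∃ μ : MatMeasure X q, Represents E Λ μ) (x : X) :
    (∃ S : Submodule ℂ (Fin q → ℂ),
      (S : Set (Fin q → ℂ)) = {v | ∃ μ : MatMeasure X q, Represents E Λ μ ∧
        ∃ u, (matAtom μ x).mulVec u = v}) ∧
    ∃ (k : ℕ) (pts : Fin k → X) (Mats : Fin k → Matrix (Fin q) (Fin q) ℂ),
      (∀ j, (Mats j).PosSemidef) ∧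
      (∀ F : E, Λ F =
        ∑ j, (((F : X → Matrix (Fin q) (Fin q) ℂ) (pts j) * Mats j).trace).re) ∧
      {v | ∃ μ : MatMeasure X q, Represents E Λ μ ∧ ∃ u, (matAtom μ x).mulVec u = v}
        = {v | ∃ u, (∑ j ∈ Finset.univ.filter fun j => pts j = x, Mats j).mulVec u = v} := by
  let W : MatMeasure X q → Submodule ℂ (Fin q → ℂ) :=
    fun μ => LinearMap.range (matAtom μ x).mulVecLin
  obtain ⟨μ₀, hμ₀⟩ := hΛ
  obtain ⟨_, ⟨μ, hμ, rfl⟩, hmax⟩ := wellFounded_gt.has_min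
    {S : Submodule ℂ (Fin q → ℂ) | ∃ μ : MatMeasure X q, Represents E Λ μ ∧ W μ = S}
    ⟨W μ₀, μ₀, hμ₀, rfl⟩
  obtain ⟨k, pts, Mats, hMats, hrep, hatom⟩ := hμ.exists_atomic_sum_eq_matAtom x
  have hle : ∀ ν, Represents E Λ ν → W ν ≤ W μ := fun ν hν => by
    obtain ⟨ρ, hρ, hρx⟩ := hν.exists_matAtom_eq_midpoint pts Mats hMats hrep x
    rw [hatom] at hρx
    have hWρ : W ρ = _ := congrArg (LinearMap.range ∘ mulVecLin) hρx
    have hνρ : W ν ≤ W ρ := by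
      rw [hWρ]
      exact (ν.matAtom_posSemidef x).range_mulVecLin_le_smul_add_smul
        (μ.matAtom_posSemidef x) (by norm_num) (by norm_num)
    have hμρ : W μ ≤ W ρ := by
      rw [hWρ, add_comm]
      exact (μ.matAtom_posSemidef x).range_mulVecLin_le_smul_add_smul
        (ν.matAtom_posSemidef x) (by norm_num) (by norm_num)
    exact hνρ.trans (eq_of_le_of_not_lt hμρ (hmax _ ⟨ρ, hρ, rfl⟩)).ge
  have hW : {v | ∃ ν : MatMeasure X q, Represents E Λ ν ∧ ∃ u, (matAtom ν x).mulVec u = v}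
      = W μ :=
    Set.Subset.antisymm (fun v ⟨ν, hν, hv⟩ => hle ν hν hv) fun v hv => ⟨μ, hμ, hv⟩
  exact ⟨⟨W μ, hW.symm⟩, k, pts, Mats, hMats, hrep, by rw [hW, hatom]; rfl⟩

/-- For a moment functional `Λ` on `E` and `x ∈ X`, the set
`W(Λ; x) = ⋃_{μ ∈ M_Λ} ran μ({x})` is a linear subspace of `ℂ^q`, and there is a finitely
atomic representing measure `ν = Σ_j Mats_j δ_{pts_j}` of `Λ` with `W(Λ; x) = ran ν({x})`. -/
theorem stmt_17 {X : Type*} [MeasurableSpace X] [MeasurableSingletonClass X] [DecidableEq X]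
    {q : ℕ} (E : Submodule ℝ (X → Matrix (Fin q) (Fin q) ℂ)) [FiniteDimensional ℝ E]
    (hmeas : ∀ F ∈ E, ∀ i j, Measurable fun x => F x i j)
    (hherm : ∀ F ∈ E, ∀ x, (F x).IsHermitian)
    (Λ : E →ₗ[ℝ] ℝ) (hΛ : ∃ μ : MatMeasure X q, Represents E Λ μ) (x : X) :
    (∃ S : Submodule ℂ (Fin q → ℂ),
      (S : Set (Fin q → ℂ)) = {v | ∃ μ : MatMeasure X q, Represents E Λ μ ∧
        ∃ u, (matAtom μ x).mulVec u = v}) ∧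
    ∃ (k : ℕ) (pts : Fin k → X) (Mats : Fin k → Matrix (Fin q) (Fin q) ℂ),
      (∀ j, (Mats j).PosSemidef) ∧
      (∀ F : E, Λ F =
        ∑ j, (((F : X → Matrix (Fin q) (Fin q) ℂ) (pts j) * Mats j).trace).re) ∧
      {v | ∃ μ : MatMeasure X q, Represents E Λ μ ∧ ∃ u, (matAtom μ x).mulVec u = v}
        = {v | ∃ u, (∑ j ∈ Finset.univ.filter fun j => pts j = x, Mats j).mulVec u = v} :=
  stmt_17_general E Λ hΛ x
end
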